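/- Combining the four error bounds |I¹| ≤ C₁L^{-(q+1)}, |I³| ≤ C₃L^{-(q+1)}, |I⁴| ≤ C₄e^{-2λ₀T}, and |I²| ≤ C(R^{d−1}T^{-d/2}e^{-c|R−L|²/T} + R^{2(d−1)}T^{-d}e^{-2c|R−L|²/T}), and choosing L = k_o R with 0 < k_o < 1 and T = k_T(R−L) with k_T = √(c/(2λ₀)), the total resonance error satisfies ‖a⁰_{R,L,T} − a⁰‖_F ≤ C[R^{-(q+1)} + (1 + R^{d/2−1}) e^{-√(2λ₀c)(1−k_o)R}] for a constant C independent of R. -/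
import Mathlib


open MeasureTheory Real Set

lemma pow_le_factorial_mul_exp {x : ℝ} (hx : 0 ≤ x) (n : ℕ) :
    x ^ n ≤ (n.factorial : ℝ) * Real.exp x := by
  have h := Real.sum_le_exp_of_nonneg hx (n + 1)
  have h2 : x ^ n / (n.factorial : ℝ) ≤
      ∑ i ∈ Finset.range (n + 1), x ^ i / (i.factorial : ℝ) :=
    Finset.single_le_sum (f := fun i => x ^ i / (i.factorial : ℝ))
      (fun i _ => by positivity) (Finset.self_mem_range_succ n)
  have hf : (0 : ℝ) < (n.factorial : ℝ) := by exact_mod_cast n.factorial_pos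
  have := (div_le_iff₀ hf).1 (h2.trans h)
  linarith

/-- Combining the averaging, truncation and boundary error bounds, with the optimal
choices `L = k_o R` and `T = k_T (R - L)`, `k_T = √(c/(2λ₀))`, the total resonance
error decays like `R^{-(q+1)} + (1 + R^{d/2-1}) e^{-√(2λ₀c)(1-k_o)R}`. -/
theorem stmt16 {d : ℕ} (hd : 1 ≤ d) (q : ℕ)
    (lam0 c ko CA C4 CB : ℝ)
    (hlam : 0 < lam0) (hc : 0 < c) (hko : 0 < ko) (hko1 : ko < 1)
    (hCA : 0 ≤ CA) (hC4 : 0 ≤ C4) (hCB : 0 ≤ CB)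
    (err : ℝ → ℝ)
    (herr : ∀ R : ℝ, 1 ≤ R →
      err R ≤
        CA * (ko * R) ^ (-((q : ℝ) + 1)) +
        C4 * Real.exp (-2 * lam0 * (Real.sqrt (c / (2 * lam0)) * (R - ko * R))) +
        CB * ((R ^ (d - 1) *
            (Real.sqrt (c / (2 * lam0)) * (R - ko * R)) ^ (-(d : ℝ) / 2) *
            Real.exp (-c * (R - ko * R) ^ 2 /
              (Real.sqrt (c / (2 * lam0)) * (R - ko * R)))) +
          (R ^ (2 * (d - 1)) *
            (Real.sqrt (c / (2 * lam0)) * (R - ko * R)) ^ (-(d : ℝ)) *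
            Real.exp (-2 * c * (R - ko * R) ^ 2 /
              (Real.sqrt (c / (2 * lam0)) * (R - ko * R)))))) :
    ∃ C : ℝ, 0 < C ∧ ∀ R : ℝ, 1 ≤ R →
      err R ≤ C * (R ^ (-((q : ℝ) + 1)) +
        (1 + R ^ ((d : ℝ) / 2 - 1)) *
          Real.exp (-Real.sqrt (2 * lam0 * c) * (1 - ko) * R)) := by
  set s : ℝ := Real.sqrt (c / (2 * lam0)) with hs
  set A : ℝ := Real.sqrt (2 * lam0 * c) with hA
  have hs0 : 0 < s := Real.sqrt_pos.2 (by positivity)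
  have hA0 : 0 < A := Real.sqrt_pos.2 (by positivity)
  have hs2 : s ^ 2 = c / (2 * lam0) := Real.sq_sqrt (by positivity)
  have hko1' : (0 : ℝ) < 1 - ko := by linarith
  -- key identities
  have key1 : 2 * lam0 * s = A := by
    have h1 : (2 * lam0 * s) ^ 2 = 2 * lam0 * c := by
      rw [mul_pow, hs2]; field_simp
    rw [hA, ← h1, Real.sqrt_sq (by positivity)]
  have hcAs : c = A * s := by
    have h1 : (c / s) ^ 2 = 2 * lam0 * c := by
      rw [div_pow, hs2]; field_simp
    have h2 : c / s = A := by rw [hA, ← h1, Real.sqrt_sq (by positivity)]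
    field_simp at h2; linarith
  -- the exponential rate
  set a : ℝ := A * (1 - ko) with ha
  have ha0 : 0 < a := by positivity
  -- constants
  set c3 : ℝ := (s * (1 - ko)) ^ (-(d : ℝ) / 2) with hc3
  set c4 : ℝ := (s * (1 - ko)) ^ (-(d : ℝ)) with hc4
  have hc30 : 0 < c3 := Real.rpow_pos_of_pos (by positivity) _
  have hc40 : 0 < c4 := Real.rpow_pos_of_pos (by positivity) _
  set M : ℝ := (d.factorial : ℝ) / a ^ d with hM
  have hM0 : 0 < M := by positivity
  set e : ℝ := -((q : ℝ) + 1) with he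
  have hkoe : 0 < ko ^ e := Real.rpow_pos_of_pos hko _
  refine ⟨CA * ko ^ e + C4 + CB * c3 + CB * c4 * M + 1, by positivity, ?_⟩
  intro R hR
  have hR0 : (0 : ℝ) < R := by linarith
  have hD0 : 0 < R - ko * R := by
    have := mul_lt_mul_of_pos_right hko1 hR0
    linarith
  have hsD0 : 0 < s * (R - ko * R) := by positivity
  set T1 : ℝ := R ^ e with hT1
  set P : ℝ := R ^ ((d : ℝ) / 2 - 1) with hP
  set E : ℝ := Real.exp (-(a * R)) with hE
  have hT10 : 0 < T1 := Real.rpow_pos_of_pos hR0 _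
  have hP0 : 0 < P := Real.rpow_pos_of_pos hR0 _
  have hE0 : 0 < E := Real.exp_pos _
  set G : ℝ := T1 + (1 + P) * E with hG
  have hT1G : T1 ≤ G := le_add_of_nonneg_right (by positivity)
  have hEG : E ≤ G := by
    calc E ≤ (1 + P) * E := le_mul_of_one_le_left hE0.le (by linarith)
      _ ≤ T1 + (1 + P) * E := le_add_of_nonneg_left hT10.le
  have hPEG : P * E ≤ G := by
    calc P * E ≤ (1 + P) * E := mul_le_mul_of_nonneg_right (by linarith) hE0.le
      _ ≤ T1 + (1 + P) * E := le_add_of_nonneg_left hT10.le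
  have hG0 : 0 < G := lt_of_lt_of_le hT10 hT1G
  -- rewrite the goal's exponential
  have hgoal : Real.exp (-A * (1 - ko) * R) = E := by
    rw [hE]; congr 1; ring
  -- the three exponent identities
  have e2 : -2 * lam0 * (s * (R - ko * R)) = -(a * R) := by
    rw [ha]; linear_combination (-(R - ko * R)) * key1
  have e3 : -c * (R - ko * R) ^ 2 / (s * (R - ko * R)) = -(a * R) := by
    rw [div_eq_iff (ne_of_gt hsD0), ha]
    linear_combination (-(R - ko * R) ^ 2) * hcAs
  have e4 : -2 * c * (R - ko * R) ^ 2 / (s * (R - ko * R)) = -(a * R) + -(a * R) := by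
    rw [div_eq_iff (ne_of_gt hsD0), ha]
    linear_combination (-2 * (R - ko * R) ^ 2) * hcAs
  -- rpow splittings
  have hsplit : s * (R - ko * R) = (s * (1 - ko)) * R := by ring
  have hrpow1 : (s * (R - ko * R)) ^ (-(d : ℝ) / 2) = c3 * R ^ (-(d : ℝ) / 2) := by
    rw [hsplit, Real.mul_rpow (by positivity) hR0.le]
  have hrpow2 : (s * (R - ko * R)) ^ (-(d : ℝ)) = c4 * R ^ (-(d : ℝ)) := by
    rw [hsplit, Real.mul_rpow (by positivity) hR0.le]
  -- natural powers as rpow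
  have hcast1 : ((d - 1 : ℕ) : ℝ) = (d : ℝ) - 1 := by
    rw [Nat.cast_sub hd]; simp
  have hcast2 : ((2 * (d - 1) : ℕ) : ℝ) = 2 * (d : ℝ) - 2 := by
    rw [Nat.cast_mul, Nat.cast_sub hd]; push_cast; ring
  have hnp1 : R ^ (d - 1) = R ^ ((d : ℝ) - 1) := by
    rw [← Real.rpow_natCast R (d - 1), hcast1]
  have hnp2 : R ^ (2 * (d - 1)) = R ^ (2 * (d : ℝ) - 2) := by
    rw [← Real.rpow_natCast R (2 * (d - 1)), hcast2]
  -- term a prefactor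
  have hpre1 : R ^ ((d : ℝ) - 1) * R ^ (-(d : ℝ) / 2) = P := by
    rw [hP, ← Real.rpow_add hR0]; congr 1; ring
  -- term b prefactor
  have hpre2 : R ^ (2 * (d : ℝ) - 2) * R ^ (-(d : ℝ)) = R ^ ((d : ℝ) - 2) := by
    rw [← Real.rpow_add hR0]; congr 1; ring
  have hRd2 : R ^ ((d : ℝ) - 2) ≤ R ^ (d : ℕ) := by
    rw [← Real.rpow_natCast R d]
    exact Real.rpow_le_rpow_of_exponent_le hR (by linarith)
  have hRdE : R ^ (d : ℕ) * E ≤ M := by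
    have hp := pow_le_factorial_mul_exp (by positivity : (0:ℝ) ≤ a * R) d
    rw [mul_pow] at hp
    rw [hM, hE, Real.exp_neg, ← div_eq_mul_inv,
      div_le_div_iff₀ (Real.exp_pos _) (by positivity : (0:ℝ) < a ^ d)]
    calc R ^ d * a ^ d = a ^ d * R ^ d := by ring
      _ ≤ (d.factorial : ℝ) * Real.exp (a * R) := hp
  -- bound each piece
  have B1 : CA * (ko * R) ^ e ≤ (CA * ko ^ e) * G := by
    rw [Real.mul_rpow hko.le hR0.le]
    calc CA * (ko ^ e * R ^ e) = (CA * ko ^ e) * T1 := by rw [hT1]; ring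
      _ ≤ (CA * ko ^ e) * G := by
          apply mul_le_mul_of_nonneg_left hT1G (by positivity)
  have B2 : C4 * Real.exp (-2 * lam0 * (s * (R - ko * R))) ≤ C4 * G := by
    rw [e2]
    exact mul_le_mul_of_nonneg_left hEG hC4
  have B3a : R ^ (d - 1) * (s * (R - ko * R)) ^ (-(d : ℝ) / 2) *
      Real.exp (-c * (R - ko * R) ^ 2 / (s * (R - ko * R))) ≤ c3 * G := by
    rw [e3, hrpow1, hnp1]
    calc R ^ ((d : ℝ) - 1) * (c3 * R ^ (-(d : ℝ) / 2)) * E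
        = c3 * (R ^ ((d : ℝ) - 1) * R ^ (-(d : ℝ) / 2) * E) := by ring
      _ = c3 * (P * E) := by rw [hpre1]
      _ ≤ c3 * G := mul_le_mul_of_nonneg_left hPEG hc30.le
  have B3b : R ^ (2 * (d - 1)) * (s * (R - ko * R)) ^ (-(d : ℝ)) *
      Real.exp (-2 * c * (R - ko * R) ^ 2 / (s * (R - ko * R))) ≤ c4 * M * G := by
    rw [e4, hrpow2, hnp2, Real.exp_add]
    calc R ^ (2 * (d : ℝ) - 2) * (c4 * R ^ (-(d : ℝ))) * (E * E)
        = c4 * ((R ^ (2 * (d : ℝ) - 2) * R ^ (-(d : ℝ))) * E * E) := by rw [hE]; ring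
      _ = c4 * (R ^ ((d : ℝ) - 2) * E * E) := by rw [hpre2]
      _ ≤ c4 * (R ^ (d : ℕ) * E * E) := by
          apply mul_le_mul_of_nonneg_left _ hc40.le
          have : R ^ ((d : ℝ) - 2) * E ≤ R ^ (d : ℕ) * E :=
            mul_le_mul_of_nonneg_right hRd2 hE0.le
          exact mul_le_mul_of_nonneg_right this hE0.le
      _ ≤ c4 * (M * E) := by
          apply mul_le_mul_of_nonneg_left _ hc40.le
          exact mul_le_mul_of_nonneg_right hRdE hE0.le
      _ ≤ c4 * (M * G) :=
          mul_le_mul_of_nonneg_left (mul_le_mul_of_nonneg_left hEG hM0.le) hc40.le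
      _ = c4 * M * G := by ring
  have hsum := herr R hR
  have hgoalG : R ^ e + (1 + P) * Real.exp (-A * (1 - ko) * R) = G := by
    rw [hgoal, hG, hT1]
  calc err R ≤ CA * (ko * R) ^ e +
        C4 * Real.exp (-2 * lam0 * (s * (R - ko * R))) +
        CB * ((R ^ (d - 1) * (s * (R - ko * R)) ^ (-(d : ℝ) / 2) *
            Real.exp (-c * (R - ko * R) ^ 2 / (s * (R - ko * R)))) +
          (R ^ (2 * (d - 1)) * (s * (R - ko * R)) ^ (-(d : ℝ)) *
            Real.exp (-2 * c * (R - ko * R) ^ 2 / (s * (R - ko * R))))) := hsum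
    _ ≤ (CA * ko ^ e) * G + C4 * G + CB * (c3 * G + c4 * M * G) :=
        add_le_add (add_le_add B1 B2)
          (mul_le_mul_of_nonneg_left (add_le_add B3a B3b) hCB)
    _ = (CA * ko ^ e + C4 + CB * c3 + CB * c4 * M) * G := by ring
    _ ≤ (CA * ko ^ e + C4 + CB * c3 + CB * c4 * M + 1) * G :=
        mul_le_mul_of_nonneg_right (by linarith) hG0.le
    _ = (CA * ko ^ e + C4 + CB * c3 + CB * c4 * M + 1) *
        (R ^ e + (1 + P) * Real.exp (-A * (1 - ko) * R)) := by rw [hgoalG]
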